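/- For n ≥ 1, the number of Tamari intervals of size n that are both modern and synchronized equals the n-th Catalan number C(2n, n)/(n+1). -/

import Mathlib

/-- Binary trees: a leaf or a binary node with two subtrees. -/
inductive BT : Type
  | leaf : BT
  | node : BT → BT → BT

namespace BT

/-- Number of binary (internal) nodes. -/
def size : BT → ℕ
  | leaf => 0
  | node l r => l.size + r.size + 1

/-- One right rotation somewhere in the tree: ((A,B),C) ↦ (A,(B,C)). -/
inductive Rot : BT → BT → Prop
  | rotate (A B C : BT) : Rot (node (node A B) C) (node A (node B C))
  | left {l l' : BT} (r : BT) : Rot l l' → Rot (node l r) (node l' r)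
  | right (l : BT) {r r' : BT} : Rot r r' → Rot (node l r) (node l r')

/-- Tamari order: reflexive-transitive closure of right rotation. -/
def tle (T T' : BT) : Prop := Relation.ReflTransGen Rot T T'

/-- Bracket-vector: sizes of right subtrees of nodes, in infix order. -/
def bracket : BT → List ℕ
  | leaf => []
  | node l r => bracket l ++ r.size :: bracket r

/-- Dual bracket-vector: sizes of left subtrees of nodes, in infix order. -/
def dualBracket : BT → List ℕ
  | leaf => []
  | node l r => dualBracket l ++ l.size :: dualBracket r

/-- Canopy word: for each leaf (left to right), 1 if it is a left child, 0 if a right child;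
the argument `b` is the value assigned to the tree if it is itself a leaf. -/
def canopyAux (b : ℕ) : BT → List ℕ
  | leaf => [b]
  | node l r => canopyAux 1 l ++ canopyAux 0 r

/-- Canopy-vector of a binary tree. -/
def canopy (T : BT) : List ℕ := canopyAux 1 T

/-- Left-right mirror. -/
def mir : BT → BT
  | leaf => leaf
  | node l r => node (mir r) (mir l)

/-- Tamari interval of size n. -/
def interval (p : BT × BT) (n : ℕ) : Prop :=
  p.1.size = n ∧ p.2.size = n ∧ tle p.1 p.2

/-- Tamari interval (of unspecified size). -/
def isInt (p : BT × BT) : Prop := p.1.size = p.2.size ∧ tle p.1 p.2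

/-- The rise operation (T,T') ↦ ((T,ε),(ε,T')). -/
def riseF (p : BT × BT) : BT × BT := (node p.1 leaf, node leaf p.2)

/-- An interval is modern when its rise is again an interval. -/
def modern (p : BT × BT) : Prop := tle (node p.1 leaf) (node leaf p.2)

/-- Infinitely modern: every iterated rise is an interval. -/
def infModern (p : BT × BT) : Prop :=
  ∀ k : ℕ, tle ((riseF^[k] p).1) ((riseF^[k] p).2)

/-- Synchronized: equal canopies. -/
def synced (p : BT × BT) : Prop := canopy p.1 = canopy p.2

/-- Self-dual: equal to its dual (mir T', mir T). -/
def selfDual (p : BT × BT) : Prop := mir p.2 = p.1 ∧ mir p.1 = p.2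

/-- Number of positions where the two canopies agree. -/
def agreeCount (p : BT × BT) : ℕ :=
  ((List.range (p.1.size + 1)).filter
    (fun i => (canopy p.1).getD i 0 == (canopy p.2).getD i 0)).length

/-- Number of canopy positions of joint type (a on top, b on bottom), for an interval (T,T')
with T' the upper tree. -/
def typeCount (a b : ℕ) (p : BT × BT) : ℕ :=
  ((List.range (p.1.size + 1)).filter
    (fun i => ((canopy p.2).getD i 0 == a) && ((canopy p.1).getD i 0 == b))).length

end BT

/-!
By the Huang–Tamari criterion, `T ≤ T'` in the Tamari order iff their bracket vectors satisfy
`u ≤ v` pointwise, and the canopy of a tree only records where its bracket vector vanishes.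
Hence `(T, T')` is a modern synchronized interval iff `u i ≤ v i`, `u (i + 1) ≤ v i` and
`u i = 0 ↔ v i = 0` for all `i`. Zeros of `u` and `v` then propagate to the right, so every node
of `T` and of `T'` has a leaf as one of its children. Deleting both roots gives a pair of the same
kind for the `r`-fold rise, where `r` changes by `+1`, `-1`, or `0` (in two ways) according to the
sides on which the two deleted leaves hang. So these intervals of size `k + 1` are counted like
bicolored Motzkin paths of length `k`, whose number is the ballot-type difference
`C(2k+1, k+1) - C(2k+1, k+2)`, the Catalan number `C_{k+1}`.
-/

theorem List.getD_append_cons {α : Type*} (l l' : List α) (x d : α) (i : ℕ) :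
    (l ++ x :: l').getD i d =
      if i < l.length then l.getD i d
      else if i = l.length then x else l'.getD (i - (l.length + 1)) d := by
  split_ifs with h₁ h₂
  · exact List.getD_append _ _ _ _ h₁
  · subst h₂
    simp
  · rw [List.getD_append_right _ _ _ _ (by omega),
      show i - l.length = i - (l.length + 1) + 1 by omega, List.getD_cons_succ]

theorem Nat.choose_add_two (n j : ℕ) :
    (n + 2).choose (j + 2) = n.choose j + 2 * n.choose (j + 1) + n.choose (j + 2) := by
  rw [Nat.choose_succ_succ', Nat.choose_succ_succ', Nat.choose_succ_succ']
  ring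

namespace BT

theorem size_eq_zero_iff {T : BT} : T.size = 0 ↔ T = leaf := by
  cases T <;> simp [size]

theorem size_eq_one_iff {T : BT} : T.size = 1 ↔ T = node leaf leaf := by
  cases T <;> simp [size, ← size_eq_zero_iff]

theorem length_bracket (T : BT) : (bracket T).length = T.size := by
  induction T with
  | leaf => rfl
  | node l r hl hr => simp [bracket, size, hl, hr]; omega

def bracketAt (T : BT) (i : ℕ) : ℕ := (bracket T).getD i 0

theorem bracketAt_of_bracket_eq {T D E : BT} {x : ℕ} (h : bracket T = bracket D ++ x :: bracket E)
    (i : ℕ) : bracketAt T i =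
      if i < D.size then bracketAt D i
      else if i = D.size then x else bracketAt E (i - (D.size + 1)) := by
  rw [bracketAt, h, List.getD_append_cons, length_bracket]
  rfl

theorem bracketAt_node (A B : BT) (i : ℕ) : bracketAt (node A B) i =
    if i < A.size then bracketAt A i
    else if i = A.size then B.size else bracketAt B (i - (A.size + 1)) :=
  bracketAt_of_bracket_eq rfl i

@[simp] theorem bracketAt_leaf (i : ℕ) : bracketAt leaf i = 0 := rfl

theorem bracketAt_le (T : BT) (i : ℕ) : bracketAt T i ≤ T.size - (i + 1) := by
  induction T generalizing i with
  | leaf => simp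
  | node A B hA hB =>
    rw [bracketAt_node]
    have := hA i
    have := hB (i - (A.size + 1))
    split_ifs <;> simp only [size] <;> omega

theorem bracketAt_of_size_le {T : BT} {i : ℕ} (h : T.size ≤ i) : bracketAt T i = 0 := by
  have := bracketAt_le T i
  omega

@[simp] theorem bracketAt_node_leaf (A : BT) : bracketAt (node A leaf) = bracketAt A := by
  funext i
  rw [bracketAt_node]
  split_ifs with h₁ h₂
  · rfl
  · exact (bracketAt_of_size_le h₂.ge).symm
  · exact (bracketAt_of_size_le (by omega)).symm

@[simp] theorem bracketAt_leaf_node_zero (B : BT) : bracketAt (node leaf B) 0 = B.size := rfl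

@[simp] theorem bracketAt_leaf_node_succ (B : BT) (i : ℕ) :
    bracketAt (node leaf B) (i + 1) = bracketAt B i := rfl

theorem Rot.size_eq {T T' : BT} (h : Rot T T') : T.size = T'.size := by
  induction h <;> simp [size, *]
  omega

theorem tle.size_eq {T T' : BT} (h : tle T T') : T.size = T'.size := by
  induction h with
  | refl => rfl
  | tail _ h ih => exact ih.trans h.size_eq

theorem Rot.bracketAt_mono {T T' : BT} (h : Rot T T') : bracketAt T ≤ bracketAt T' := by
  induction h with
  | rotate A B C =>
    intro i
    rw [bracketAt_of_bracket_eq (D := A) (E := node B C) (x := B.size) (by simp [bracket]) i,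
      bracketAt_node A (node B C) i]
    split_ifs <;> simp [size]
    omega
  | left r h ih =>
    intro i
    simp only [bracketAt_node, h.size_eq]
    split_ifs <;> simp [ih i]
  | right l h ih =>
    intro i
    simp only [bracketAt_node, h.size_eq]
    split_ifs <;> simp [ih _]

theorem tle.bracketAt_mono {T T' : BT} (h : tle T T') : bracketAt T ≤ bracketAt T' := by
  induction h with
  | refl => exact le_rfl
  | tail _ h ih => exact ih.trans h.bracketAt_mono

theorem tle_node {A A' B B' : BT} (hA : tle A A') (hB : tle B B') :
    tle (node A B) (node A' B') :=
  (hA.lift (node · B) fun _ _ => Rot.left B).trans (hB.lift (node A' ·) fun _ _ => Rot.right A')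

/-- If no bracket of the first `j` nodes (in infix order) reaches past node `j`, then rotations
bring node `j` to the root. -/
theorem exists_tle_node_of_bracketAt_lt (T : BT) {j : ℕ} (hj : j < T.size)
    (h : ∀ i < j, bracketAt T i + i < j) :
    ∃ D E x, D.size = j ∧ tle T (node D E) ∧ bracket T = bracket D ++ x :: bracket E := by
  induction T with
  | leaf => simp [size] at hj
  | node A B ihA _ =>
    obtain hjA | rfl | hAj := lt_trichotomy j A.size
    · have hA : ∀ i < j, bracketAt A i + i < j := fun i hi => by
        simpa [bracketAt_node, show i < A.size by omega] using h i hi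
      obtain ⟨D, E, x, hD, hAE, hbr⟩ := ihA hjA hA
      refine ⟨D, node E B, x, hD, ?_, by simp [bracket, hbr]⟩
      exact (tle_node hAE Relation.ReflTransGen.refl).tail (Rot.rotate D E B)
    · exact ⟨A, B, B.size, rfl, Relation.ReflTransGen.refl, rfl⟩
    · have := h A.size hAj
      simp only [bracketAt_node, lt_irrefl, if_false, if_true, size] at this hj
      omega

theorem tle_of_bracketAt_le {T T' : BT} (hs : T.size = T'.size)
    (h : bracketAt T ≤ bracketAt T') : tle T T' := by
  induction hn : T.size using Nat.strong_induction_on generalizing T T' with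
  | _ n ih =>
    cases T' with
    | leaf =>
      rw [size_eq_zero_iff.mp hs]
      exact Relation.ReflTransGen.refl
    | node A' B' =>
      have hT : T.size = A'.size + B'.size + 1 := hs
      obtain ⟨D, E, x, hD, hTDE, hbr⟩ := exists_tle_node_of_bracketAt_lt T (j := A'.size)
        (by omega) fun i hi => by
          have hTi : bracketAt T i ≤ bracketAt A' i := by simpa [bracketAt_node, hi] using h i
          have := bracketAt_le A' i
          omega
      have hE : E.size = B'.size := by
        have := congrArg List.length hbr
        simp only [length_bracket, List.length_append, List.length_cons] at this
        omega
      have hDA : bracketAt D ≤ bracketAt A' := fun i => by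
        rcases lt_or_ge i A'.size with hi | hi
        · simpa [bracketAt_of_bracket_eq hbr, bracketAt_node, hD, hi] using h i
        · simp [bracketAt_of_size_le (hD.trans_le hi)]
      have hEB : bracketAt E ≤ bracketAt B' := fun i => by
        have hi : ¬A'.size + 1 + i < A'.size ∧ A'.size + 1 + i ≠ A'.size := by omega
        simpa [bracketAt_of_bracket_eq hbr, bracketAt_node, hD, hi] using h (A'.size + 1 + i)
      exact hTDE.trans (tle_node (ih _ (by omega) hD hDA rfl) (ih _ (by omega) hE hEB rfl))

theorem tle_iff_bracketAt_le {T T' : BT} :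
    tle T T' ↔ T.size = T'.size ∧ bracketAt T ≤ bracketAt T' :=
  ⟨fun h => ⟨h.size_eq, h.bracketAt_mono⟩, fun h => tle_of_bracketAt_le h.1 h.2⟩

theorem canopyAux_eq (T : BT) :
    canopyAux 1 T = 1 :: (bracket T).map (min · 1) ∧
      canopyAux 0 T = min T.size 1 :: (bracket T).map (min · 1) := by
  induction T with
  | leaf => simp [canopyAux, bracket, size]
  | node l r hl hr =>
    have h : canopyAux 1 l ++ canopyAux 0 r = 1 :: (bracket (node l r)).map (min · 1) := by
      simp [hl.1, hr.2, bracket]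
    exact ⟨h, h.trans (by simp [size])⟩

theorem canopy_eq_canopy_iff {T T' : BT} (h : T.size = T'.size) :
    canopy T = canopy T' ↔ ∀ i, (bracketAt T i = 0 ↔ bracketAt T' i = 0) := by
  rw [canopy, canopy, (canopyAux_eq T).1, (canopyAux_eq T').1, List.cons.injEq]
  simp only [true_and, bracketAt]
  constructor
  · intro e i
    have := congrArg (fun l => l.getD i (min 0 1)) e
    simp only [List.getD_map] at this
    omega
  · intro e
    refine List.ext_getElem (by simp [length_bracket, h]) fun i h₁ h₂ => ?_
    have := e i
    simp only [List.length_map] at h₁ h₂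
    rw [List.getD_eq_getElem _ _ h₁, List.getD_eq_getElem _ _ h₂] at this
    simp only [List.getElem_map]
    omega

theorem modern_iff {T T' : BT} (h : T.size = T'.size) :
    modern (T, T') ↔ ∀ j, bracketAt T (j + 1) ≤ bracketAt T' j := by
  rw [modern, tle_iff_bracketAt_le, bracketAt_node_leaf]
  refine ⟨fun hle j => hle.2 (j + 1), fun hle => ⟨by simp [size, h], fun i => ?_⟩⟩
  cases i with
  | zero => simpa [h] using (bracketAt_le T 0).trans (Nat.sub_le _ _)
  | succ j => exact hle j

/-- For nonempty `T'`, `ShiftCond r (bracketAt T) (bracketAt T')` says that the `r`-fold rise of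
`(T, T')` is a modern synchronized interval; deleting the roots of such a pair changes `r` by at
most one. -/
def ShiftCond (r : ℕ) (u v : ℕ → ℕ) : Prop :=
  (∀ i < r, u i ≠ 0) ∧ ∀ j, u (j + r) ≤ v j ∧ u (j + r + 1) ≤ v j ∧ (u (j + r) = 0 ↔ v j = 0)

theorem modSync_iff_shiftCond_zero {T T' : BT} (h : T.size = T'.size) :
    tle T T' ∧ modern (T, T') ∧ synced (T, T') ↔ ShiftCond 0 (bracketAt T) (bracketAt T') := by
  simp only [tle_iff_bracketAt_le, modern_iff h, synced, canopy_eq_canopy_iff h, ShiftCond,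
    Pi.le_def, h, true_and, not_lt_zero, IsEmpty.forall_iff, implies_true, add_zero, forall_and]

section ShiftCond

variable {r : ℕ} {u v : ℕ → ℕ}

theorem shiftCond_succ_iff :
    ShiftCond (r + 1) u v ↔ u 0 ≠ 0 ∧ ShiftCond r (fun i => u (i + 1)) v := by
  simp only [ShiftCond, Nat.forall_lt_succ_left, ← add_assoc]
  tauto

theorem shiftCond_iff_of_ne_zero (hv : v 0 ≠ 0) :
    ShiftCond r u v ↔
      u r ≤ v 0 ∧ u (r + 1) ≤ v 0 ∧ ShiftCond (r + 1) u (fun j => v (j + 1)) := by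
  simp only [ShiftCond, Nat.forall_lt_succ_right]
  constructor
  · rintro ⟨h₀, h⟩
    refine ⟨(h 0).1.trans_eq' (by simp), (h 0).2.1.trans_eq' (by simp),
      ⟨h₀, fun h' => hv ((h 0).2.2.mp (by simpa using h'))⟩, fun j => ?_⟩
    have hj := h (j + 1)
    rw [Nat.add_right_comm j 1 r] at hj
    exact hj
  · rintro ⟨h₁, h₂, ⟨h₀, hr⟩, h⟩
    refine ⟨h₀, fun j => ?_⟩
    cases j with
    | zero => simpa [hv] using ⟨h₁, h₂, hr⟩
    | succ j =>
      have hj := h j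
      rw [← Nat.add_assoc, ← Nat.add_right_comm j 1 r] at hj
      exact hj

theorem not_shiftCond_zero_of_lt (h : v 0 < u 0) : ¬ShiftCond 0 u v :=
  fun hc => (hc.2 0).1.not_gt h

theorem shiftCond_zero_zero_iff : ShiftCond r 0 0 ↔ r = 0 := by
  simp only [ShiftCond, Pi.zero_apply, le_refl, ne_eq, not_true_eq_false, imp_false,
    implies_true, and_true]
  exact ⟨fun h => by simpa using h 0, fun h i => by omega⟩

theorem ShiftCond.fst_succ_eq_zero (hc : ShiftCond r u v) {i : ℕ} (hi : u i = 0) :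
    u (i + 1) = 0 := by
  obtain ⟨j, rfl⟩ : ∃ j, i = j + r := ⟨i - r, by
    by_contra
    exact hc.1 i (by omega) hi⟩
  have := (hc.2 j).2.2.mp hi
  have := (hc.2 j).2.1
  omega

theorem ShiftCond.snd_succ_eq_zero (hc : ShiftCond r u v) {j : ℕ} (hj : v j = 0) :
    v (j + 1) = 0 := by
  have h₁ := hc.fst_succ_eq_zero ((hc.2 j).2.2.mpr hj)
  rw [add_right_comm] at h₁
  exact (hc.2 (j + 1)).2.2.mp h₁

end ShiftCond

theorem eq_leaf_or_eq_leaf_of_bracketAt_succ_eq_zero {A B : BT}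
    (hz : ∀ i, bracketAt (node A B) i = 0 → bracketAt (node A B) (i + 1) = 0) :
    A = leaf ∨ B = leaf := by
  by_contra! h
  have hA : A.size ≠ 0 := mt size_eq_zero_iff.mp h.1
  have hB : B.size ≠ 0 := mt size_eq_zero_iff.mp h.2
  have hlast : bracketAt (node A B) (A.size - 1) = 0 := by
    have := bracketAt_le A (A.size - 1)
    rw [bracketAt_node, if_pos (by omega)]
    omega
  have := hz _ hlast
  rw [Nat.sub_add_cancel (by omega), bracketAt_node] at this
  simp_all

section RootCases

variable {r n : ℕ} {A A' B B' : BT}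

theorem shiftCond_leaf_node_leaf_node (hB : B.size = n) (hB' : B'.size = n) (hn : n ≠ 0) :
    ShiftCond r (bracketAt (node leaf B)) (bracketAt (node leaf B')) ↔
      ShiftCond r (bracketAt B) (bracketAt B') := by
  have hle : ∀ i, bracketAt (node leaf B) i ≤ n := fun i =>
    (bracketAt_le _ i).trans (by simp only [size]; omega)
  rw [shiftCond_iff_of_ne_zero (by simpa [hB'] using hn), shiftCond_succ_iff]
  simpa [hB, hB', hn, hle] using fun _ => hle (r + 1)

theorem shiftCond_node_leaf_leaf_node (hA : A.size = n) (hB' : B'.size = n) (hn : n ≠ 0) :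
    ShiftCond r (bracketAt (node A leaf)) (bracketAt (node leaf B')) ↔
      ShiftCond (r + 1) (bracketAt A) (bracketAt B') := by
  have hle : ∀ i, bracketAt A i ≤ n := fun i => (bracketAt_le A i).trans (by omega)
  rw [bracketAt_node_leaf, shiftCond_iff_of_ne_zero (by simpa [hB'] using hn)]
  simp [hB', hle]

theorem shiftCond_leaf_node_node_leaf (hB : B.size = n) (hA' : A'.size = n) (hn : n ≠ 0) :
    ShiftCond r (bracketAt (node leaf B)) (bracketAt (node A' leaf)) ↔
      r ≠ 0 ∧ ShiftCond (r - 1) (bracketAt B) (bracketAt A') := by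
  rw [bracketAt_node_leaf]
  cases r with
  | zero =>
    have := bracketAt_le A' 0
    simpa using not_shiftCond_zero_of_lt (by simp; omega)
  | succ r => simp [shiftCond_succ_iff, hB, hn]

end RootCases

def shiftSet (r m : ℕ) : Set (BT × BT) :=
  {p | p.1.size = m ∧ p.2.size = m ∧ ShiftCond r (bracketAt p.1) (bracketAt p.2)}

def graft : Bool → BT → BT
  | true, T => node leaf T
  | false, T => node T leaf

theorem graft_injective (b : Bool) : Function.Injective (graft b) := by
  cases b <;> intro _ _ h <;> simpa [graft] using h

theorem eq_of_graft_eq_graft {b b' : Bool} {X X' : BT} (hX : X ≠ leaf)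
    (h : graft b X = graft b' X') : b = b' := by
  cases b <;> cases b' <;> simp_all [graft]

theorem disjoint_image_graft {b₁ b₁' b₂ b₂' : Bool} {S S' : Set (BT × BT)}
    (hS : ∀ q ∈ S, q.1 ≠ leaf ∧ q.2 ≠ leaf) (hb : b₁ ≠ b₂ ∨ b₁' ≠ b₂') :
    Disjoint (Prod.map (graft b₁) (graft b₁') '' S) (Prod.map (graft b₂) (graft b₂') '' S') := by
  rw [Set.disjoint_left]
  rintro _ ⟨q, hq, rfl⟩ ⟨q', -, h⟩
  simp only [Prod.map, Prod.mk.injEq] at h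
  exact hb.elim (· (eq_of_graft_eq_graft (hS q hq).1 h.1.symm))
    (· (eq_of_graft_eq_graft (hS q hq).2 h.2.symm))

theorem ne_leaf_of_mem_shiftSet {r k : ℕ} {q : BT × BT} (hq : q ∈ shiftSet r (k + 1)) :
    q.1 ≠ leaf ∧ q.2 ≠ leaf := by
  simp only [ne_eq, ← size_eq_zero_iff, hq.1, hq.2.1]
  omega

theorem exists_graft_of_mem_shiftSet {r k : ℕ} {p : BT × BT} (hp : p ∈ shiftSet r (k + 2)) :
    ∃ b b' X X', p = (graft b X, graft b' X') ∧ X.size = k + 1 ∧ X'.size = k + 1 := by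
  obtain ⟨T, T'⟩ := p
  obtain ⟨hs, hs', hc⟩ := hp
  obtain ⟨Y, Z, rfl⟩ : ∃ Y Z, T = node Y Z := by cases T <;> simp_all [size]
  obtain ⟨Y', Z', rfl⟩ : ∃ Y Z, T' = node Y Z := by cases T' <;> simp_all [size]
  have hT := eq_leaf_or_eq_leaf_of_bracketAt_succ_eq_zero fun _ => hc.fst_succ_eq_zero
  have hT' := eq_leaf_or_eq_leaf_of_bracketAt_succ_eq_zero fun _ => hc.snd_succ_eq_zero
  rcases hT with rfl | rfl <;> rcases hT' with rfl | rfl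
  · exact ⟨true, true, Z, Z', rfl, by simpa [size] using hs, by simpa [size] using hs'⟩
  · exact ⟨true, false, Z, Y', rfl, by simpa [size] using hs, by simpa [size] using hs'⟩
  · exact ⟨false, true, Y, Z', rfl, by simpa [size] using hs, by simpa [size] using hs'⟩
  · exact ⟨false, false, Y, Y', rfl, by simpa [size] using hs, by simpa [size] using hs'⟩

theorem shiftSet_add_two (r k : ℕ) :
    shiftSet r (k + 2) =
      Prod.map (graft true) (graft true) '' shiftSet r (k + 1) ∪
      Prod.map (graft false) (graft false) '' shiftSet r (k + 1) ∪
      Prod.map (graft false) (graft true) '' shiftSet (r + 1) (k + 1) ∪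
      Prod.map (graft true) (graft false) '' {q ∈ shiftSet (r - 1) (k + 1) | r ≠ 0} := by
  ext p
  constructor
  · intro hp
    obtain ⟨b, b', X, X', rfl, hX, hX'⟩ := exists_graft_of_mem_shiftSet hp
    have hc := hp.2.2
    cases b <;> cases b' <;> simp only [graft] at hc
    · exact Or.inl (Or.inl (Or.inr ⟨(X, X'), ⟨hX, hX', by simpa using hc⟩, rfl⟩))
    · rw [shiftCond_node_leaf_leaf_node hX hX' (by omega)] at hc
      exact Or.inl (Or.inr ⟨(X, X'), ⟨hX, hX', hc⟩, rfl⟩)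
    · obtain ⟨hr, hc⟩ := (shiftCond_leaf_node_node_leaf hX hX' (by omega)).mp hc
      exact Or.inr ⟨(X, X'), ⟨⟨hX, hX', hc⟩, hr⟩, rfl⟩
    · rw [shiftCond_leaf_node_leaf_node hX hX' (by omega)] at hc
      exact Or.inl (Or.inl (Or.inl ⟨(X, X'), ⟨hX, hX', hc⟩, rfl⟩))
  · rintro (((⟨⟨X, X'⟩, ⟨hX, hX', hc⟩, rfl⟩ | ⟨⟨X, X'⟩, ⟨hX, hX', hc⟩, rfl⟩) |
      ⟨⟨X, X'⟩, ⟨hX, hX', hc⟩, rfl⟩) | ⟨⟨X, X'⟩, ⟨⟨hX, hX', hc⟩, hr⟩, rfl⟩) <;>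
      refine ⟨by simp_all [graft, size], by simp_all [graft, size], ?_⟩ <;>
      simp only [Prod.map, graft]
    · exact (shiftCond_leaf_node_leaf_node hX hX' (by omega)).mpr hc
    · simpa using hc
    · exact (shiftCond_node_leaf_leaf_node hX hX' (by omega)).mpr hc
    · exact (shiftCond_leaf_node_node_leaf hX hX' (by omega)).mpr ⟨hr, hc⟩

theorem shiftSet_one (r : ℕ) :
    shiftSet r 1 = if r = 0 then {(node leaf leaf, node leaf leaf)} else ∅ := by
  have hz : bracketAt (node leaf leaf) = 0 := funext fun i => by simp [bracketAt_node, size]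
  ext ⟨T, T'⟩
  simp only [shiftSet, size_eq_one_iff, Set.mem_ofPred_eq]
  split_ifs with hr <;> aesop (add simp [shiftCond_zero_zero_iff])

def toBinaryTree : BT → BinaryTree Unit
  | leaf => .nil
  | node l r => .node () (toBinaryTree l) (toBinaryTree r)

theorem toBinaryTree_injective : Function.Injective toBinaryTree := by
  intro T T' h
  induction T generalizing T' with
  | leaf => cases T' <;> simp_all [toBinaryTree]
  | node l r ihl ihr =>
    cases T' with
    | leaf => simp [toBinaryTree] at h
    | node l' r' =>
      simp only [toBinaryTree, BinaryTree.node.injEq, true_and] at h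
      rw [ihl h.1, ihr h.2]

theorem numNodes_toBinaryTree (T : BT) : (toBinaryTree T).numNodes = T.size := by
  induction T <;> simp [toBinaryTree, size, *]

theorem finite_setOf_size_eq (m : ℕ) : {T : BT | T.size = m}.Finite := by
  have : {T : BT | T.size = m} = toBinaryTree ⁻¹' (BinaryTree.treesOfNumNodesEq m : Set _) := by
    ext T
    simp [numNodes_toBinaryTree]
  rw [this]
  exact (Finset.finite_toSet _).preimage toBinaryTree_injective.injOn

instance (r m : ℕ) : Finite (shiftSet r m) :=
  (((finite_setOf_size_eq m).prod (finite_setOf_size_eq m)).subset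
    fun _ hp => ⟨hp.1, hp.2.1⟩).to_subtype

theorem ncard_shiftSet_add_two (r k : ℕ) :
    (shiftSet r (k + 2)).ncard = 2 * (shiftSet r (k + 1)).ncard +
      (shiftSet (r + 1) (k + 1)).ncard +
        if r = 0 then 0 else (shiftSet (r - 1) (k + 1)).ncard := by
  have hinj : ∀ b b', Function.Injective (Prod.map (graft b) (graft b')) :=
    fun b b' => (graft_injective b).prodMap (graft_injective b')
  have hlast :
      (Prod.map (graft true) (graft false) '' {q ∈ shiftSet (r - 1) (k + 1) | r ≠ 0}).ncard =
        if r = 0 then 0 else (shiftSet (r - 1) (k + 1)).ncard := by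
    rw [Set.ncard_image_of_injective _ (hinj _ _)]
    split_ifs with hr <;> simp [hr]
  rw [shiftSet_add_two, Set.ncard_union_eq, Set.ncard_union_eq, Set.ncard_union_eq, hlast,
    Set.ncard_image_of_injective _ (hinj _ _), Set.ncard_image_of_injective _ (hinj _ _),
    Set.ncard_image_of_injective _ (hinj _ _)]
  · ring
  all_goals
    try simp only [Set.disjoint_union_left]
    and_intros
  all_goals exact disjoint_image_graft (fun _ => ne_leaf_of_mem_shiftSet) (by decide)

/-- The number of bicolored Motzkin paths (steps up, down, and two kinds of flat steps) of
length `k` from height `r` down to height `0`. -/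
def biMotzkin : ℕ → ℕ → ℕ
  | 0, r => if r = 0 then 1 else 0
  | k + 1, r =>
    2 * biMotzkin k r + biMotzkin k (r + 1) + if r = 0 then 0 else biMotzkin k (r - 1)

theorem ncard_shiftSet (k r : ℕ) : (shiftSet r (k + 1)).ncard = biMotzkin k r := by
  induction k generalizing r with
  | zero => rw [shiftSet_one]; split_ifs <;> simp [biMotzkin, *]
  | succ k ih =>
    rw [ncard_shiftSet_add_two, ih, ih, biMotzkin]
    split_ifs <;> simp [ih]

theorem biMotzkin_add_choose (k r : ℕ) :
    biMotzkin k r + (2 * k + 1).choose (k + r + 2) = (2 * k + 1).choose (k + r + 1) := by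
  induction k generalizing r with
  | zero => rcases r with _ | r <;> simp [biMotzkin, Nat.choose_eq_zero_of_lt]
  | succ k ih =>
    rw [show 2 * (k + 1) + 1 = 2 * k + 1 + 2 by ring, show k + 1 + r + 2 = k + r + 1 + 2 by ring,
      show k + 1 + r + 1 = k + r + 2 by ring, Nat.choose_add_two, Nat.choose_add_two, biMotzkin]
    rcases r with _ | r
    · have := Nat.choose_symm_half k
      have := ih 0
      have := ih 1
      rw [if_pos rfl]
      ring_nf at *
      omega
    · have := ih r
      have := ih (r + 1)
      have := ih (r + 2)
      rw [if_neg (Nat.add_one_ne_zero r), Nat.add_sub_cancel]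
      ring_nf at *
      omega

theorem biMotzkin_zero_eq_catalan (k : ℕ) : biMotzkin k 0 = catalan (k + 1) := by
  refine Nat.eq_of_mul_eq_mul_left (Nat.succ_pos (k + 1)) ?_
  rw [succ_mul_catalan_eq_centralBinom, Nat.centralBinom_eq_two_mul_choose,
    show 2 * (k + 1) = 2 * k + 1 + 1 by ring, Nat.choose_succ_succ', ← Nat.choose_symm_half]
  have hb := congrArg ((k + 2) * ·) (biMotzkin_add_choose k 0)
  have habs := Nat.choose_succ_right_eq (2 * k + 1) (k + 1)
  rw [show 2 * k + 1 - (k + 1) = k by omega] at habs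
  simp only [add_zero] at hb
  linarith

end BT

theorem count_modern_synchronized_intervals (n : ℕ) (hn : 1 ≤ n) :
    (n + 1) * Set.ncard {p : BT × BT | BT.interval p n ∧ BT.modern p ∧ BT.synced p} =
      Nat.choose (2 * n) n := by
  obtain ⟨k, rfl⟩ : ∃ k, n = k + 1 := ⟨n - 1, by omega⟩
  have hset : {p : BT × BT | BT.interval p (k + 1) ∧ BT.modern p ∧ BT.synced p} =
      BT.shiftSet 0 (k + 1) := by
    ext ⟨T, T'⟩
    simp only [BT.interval, BT.shiftSet, Set.mem_ofPred_eq, and_assoc]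
    exact and_congr_right fun hT => and_congr_right fun hT' =>
      BT.modSync_iff_shiftCond_zero (hT.trans hT'.symm)
  rw [hset, BT.ncard_shiftSet, BT.biMotzkin_zero_eq_catalan, succ_mul_catalan_eq_centralBinom,
    Nat.centralBinom_eq_two_mul_choose]
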